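/- Let G : ℝ^d → ℝ be differentiable with L-Lipschitz gradient (L > 0) and bounded: |G(x)| ≤ B for all x ∈ ℝ^d (B > 0). Let k ≤ d, fix 0 < c < 1/2, set the step size α = c/L, and let T ≥ 1. Let θ₀ ∈ ℝ^d be k-sparse, let g₀, …, g_{T−1} ∈ ℝ^d, and for each t let θ_{t+1} be a minimizer of u ↦ ‖u − (θ_t − α g_t)‖ over all k-sparse u ∈ ℝ^d. Then, with c₁ = (2c(1−2c) + 2)/(c(1−2c)) and c₂ = (12 − 8c)/(1 − 2c), the following convergence bound holds: (1/T) · Σ_{t=0}^{T−1} ‖g_t − ∇G(θ_{t+1}) + (1/α)(θ_{t+1} − θ_t)‖² ≤ c₁ · (1/T) · Σ_{t=0}^{T−1} ‖g_t − ∇G(θ_t)‖² + c₂ · B/(αT). -/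

import Mathlib

open scoped RealInnerProductSpace

/-!
Write `e_t = g_t - ∇G θ_t` and `Δ_t = θ_{t+1} - θ_t`. Since `θ_t` is itself `k`-sparse, comparing
the hard-thresholding step with the competitor `θ_t` gives `2α⟪g_t, Δ_t⟫ ≤ -‖Δ_t‖²`; with the
descent lemma this is the sufficient decrease
`2α⟪e_t, Δ_t⟫ + (1 - c)‖Δ_t‖² ≤ 2α (G θ_t - G θ_{t+1})`, and Young's inequality turns it into a
bound on `‖Δ_t‖²` once `c < 1/2`. The residual is `α⁻¹ (α e_t + Δ_t) + (∇G θ_t - ∇G θ_{t+1})`,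
whose last term has norm at most `(c/α)‖Δ_t‖`, so its square is controlled by `‖e_t‖²` and the
decrease of `G`. The decreases telescope to at most `2B`, and the constants obtained this way are
below `c₁` and `c₂`.
-/

/-- The `L₀` pseudo-norm: number of nonzero coordinates. -/
noncomputable def l0norm {d : ℕ} (z : EuclideanSpace ℝ (Fin d)) : ℕ :=
  (Finset.univ.filter fun i => z i ≠ 0).card

section LipschitzGradient

variable {E : Type*} [NormedAddCommGroup E] [InnerProductSpace ℝ E]

theorem two_mul_inner_le_neg_norm_sq_of_norm_sub_le {x y g : E} {α : ℝ}
    (h : ‖y - (x - α • g)‖ ≤ ‖x - (x - α • g)‖) :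
    2 * α * ⟪g, y - x⟫ ≤ -‖y - x‖ ^ 2 := by
  rw [sub_sub_cancel, show y - (x - α • g) = (y - x) + α • g by abel] at h
  have hsq := pow_le_pow_left₀ (norm_nonneg _) h 2
  rw [norm_add_sq_real, real_inner_smul_right, real_inner_comm] at hsq
  linarith

variable [CompleteSpace E] {G : E → ℝ} {L : ℝ}

theorem hasDerivAt_comp_add_smul (hG : Differentiable ℝ G) (x v : E) (s : ℝ) :
    HasDerivAt (fun s : ℝ => G (x + s • v)) ⟪gradient G (x + s • v), v⟫ s := by
  have hline : HasDerivAt (fun s : ℝ => x + s • v) v s := by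
    simpa using ((hasDerivAt_id s).smul_const v).const_add x
  simpa [Function.comp_def, InnerProductSpace.toDual_apply_apply] using
    (hG (x + s • v)).hasGradientAt.hasFDerivAt.comp_hasDerivAt s hline

theorem le_add_inner_gradient_add_sq (hG : Differentiable ℝ G)
    (hGlip : ∀ x y, ‖gradient G x - gradient G y‖ ≤ L * ‖x - y‖) (x y : E) :
    G y ≤ G x + ⟪gradient G x, y - x⟫ + L / 2 * ‖y - x‖ ^ 2 := by
  set v := y - x
  let ψ : ℝ → ℝ := fun s =>
    G (x + s • v) - s * ⟪gradient G x, v⟫ - s ^ 2 * (L / 2 * ‖v‖ ^ 2)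
  have hψ : ∀ s, HasDerivAt ψ
      (⟪gradient G (x + s • v) - gradient G x, v⟫ - s * (L * ‖v‖ ^ 2)) s := by
    intro s
    refine (((hasDerivAt_comp_add_smul hG x v s).sub (hasDerivAt_mul_const _)).sub
      ((hasDerivAt_pow 2 s).mul_const _)).congr_deriv ?_
    rw [inner_sub_left]
    ring
  have hanti : AntitoneOn ψ (Set.Ici 0) := by
    refine antitoneOn_of_hasDerivWithinAt_nonpos (convex_Ici 0)
      (fun s _ => (hψ s).continuousAt.continuousWithinAt) (fun s _ => (hψ s).hasDerivWithinAt) ?_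
    intro s hs
    rw [interior_Ici] at hs
    rw [sub_nonpos]
    calc ⟪gradient G (x + s • v) - gradient G x, v⟫
        ≤ ‖gradient G (x + s • v) - gradient G x‖ * ‖v‖ := real_inner_le_norm _ _
      _ ≤ L * ‖s • v‖ * ‖v‖ := by gcongr; simpa using hGlip (x + s • v) x
      _ = s * (L * ‖v‖ ^ 2) := by rw [norm_smul, Real.norm_of_nonneg hs.le]; ring
  have h01 : ψ 1 ≤ ψ 0 := hanti Set.self_mem_Ici (Set.mem_Ici.2 zero_le_one) zero_le_one
  have hxv : x + v = y := add_sub_cancel x y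
  simp only [ψ, one_smul, zero_smul, add_zero, hxv] at h01
  linarith

variable {α c : ℝ} {x y g : E}

theorem sufficient_decrease (hG : Differentiable ℝ G)
    (hGlip : ∀ x y, ‖gradient G x - gradient G y‖ ≤ L * ‖x - y‖) (hα : 0 ≤ α) (hLα : L * α = c)
    (hstep : ‖y - (x - α • g)‖ ≤ ‖x - (x - α • g)‖) :
    2 * α * ⟪g - gradient G x, y - x⟫ + (1 - c) * ‖y - x‖ ^ 2 ≤ 2 * α * (G x - G y) := by
  have hdesc := mul_le_mul_of_nonneg_left (le_add_inner_gradient_add_sq hG hGlip x y) hα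
  have hinner := two_mul_inner_le_neg_norm_sq_of_norm_sub_le hstep
  rw [inner_sub_left, ← hLα]
  linarith

theorem mul_norm_sub_sq_le (hG : Differentiable ℝ G)
    (hGlip : ∀ x y, ‖gradient G x - gradient G y‖ ≤ L * ‖x - y‖) (hα : 0 ≤ α) (hc : 0 ≤ c)
    (hLα : L * α = c) (hstep : ‖y - (x - α • g)‖ ≤ ‖x - (x - α • g)‖) :
    c * (1 - 2 * c) * ‖y - x‖ ^ 2 ≤
      2 * c * α * (G x - G y) + α ^ 2 * ‖g - gradient G x‖ ^ 2 := by
  have hdec := mul_le_mul_of_nonneg_left (sufficient_decrease hG hGlip hα hLα hstep) hc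
  have hcs := mul_le_mul_of_nonneg_left
    (neg_le_of_abs_le (abs_real_inner_le_norm (g - gradient G x) (y - x))) (mul_nonneg hc hα)
  nlinarith [sq_nonneg (α * ‖g - gradient G x‖ - c * ‖y - x‖)]

/-- Up to sign, the element of the Fréchet subdifferential of `G` plus the indicator of the
constraint set at `y`, when `y` is a projection of `x - α • g` onto that set. -/
noncomputable def stepResidual (G : E → ℝ) (α : ℝ) (g x y : E) : E :=
  g - gradient G y + α⁻¹ • (y - x)

theorem sq_mul_norm_stepResidual_le (hG : Differentiable ℝ G)
    (hGlip : ∀ x y, ‖gradient G x - gradient G y‖ ≤ L * ‖x - y‖) (hα : 0 < α)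
    (hLα : L * α = c) (hstep : ‖y - (x - α • g)‖ ≤ ‖x - (x - α • g)‖) :
    α ^ 2 * ‖stepResidual G α g x y‖ ^ 2 ≤
      2 * α ^ 2 * ‖g - gradient G x‖ ^ 2 + 4 * α * (G x - G y) + 2 * c * (1 + c) * ‖y - x‖ ^ 2 := by
  have hsplit : α • stepResidual G α g x y =
      (α • (g - gradient G x) + (y - x)) + α • (gradient G x - gradient G y) := by
    rw [stepResidual, smul_add, smul_inv_smul₀ hα.ne']
    module
  have hlip : ‖α • (gradient G x - gradient G y)‖ ≤ c * ‖y - x‖ := by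
    rw [norm_smul, Real.norm_of_nonneg hα.le, ← hLα, norm_sub_rev y x, mul_comm L, mul_assoc]
    exact mul_le_mul_of_nonneg_left (hGlip x y) hα.le
  have hexpand : ‖α • (g - gradient G x) + (y - x)‖ ^ 2 =
      α ^ 2 * ‖g - gradient G x‖ ^ 2 + 2 * α * ⟪g - gradient G x, y - x⟫ + ‖y - x‖ ^ 2 := by
    rw [norm_add_sq_real, norm_smul, Real.norm_of_nonneg hα.le, real_inner_smul_left]
    ring
  have hnorm : α ^ 2 * ‖stepResidual G α g x y‖ ^ 2 ≤
      2 * ‖α • (g - gradient G x) + (y - x)‖ ^ 2 + 2 * (c * ‖y - x‖) ^ 2 := by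
    have hscale : α ^ 2 * ‖stepResidual G α g x y‖ ^ 2 = ‖α • stepResidual G α g x y‖ ^ 2 := by
      rw [norm_smul, Real.norm_of_nonneg hα.le, mul_pow]
    rw [hscale, hsplit]
    calc _ ≤ (‖α • (g - gradient G x) + (y - x)‖ + c * ‖y - x‖) ^ 2 := by
          gcongr; exact (norm_add_le _ _).trans (by gcongr)
      _ ≤ _ := add_sq_le.trans_eq (by ring)
  have hdec := sufficient_decrease hG hGlip hα.le hLα hstep
  rw [hexpand] at hnorm
  linarith

theorem stepResidual_descent (hG : Differentiable ℝ G)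
    (hGlip : ∀ x y, ‖gradient G x - gradient G y‖ ≤ L * ‖x - y‖) (hα : 0 < α) (hc₀ : 0 ≤ c)
    (hc : c ≤ 1 / 2) (hLα : L * α = c) (hstep : ‖y - (x - α • g)‖ ≤ ‖x - (x - α • g)‖) :
    (1 - 2 * c) * (α ^ 2 * ‖stepResidual G α g x y‖ ^ 2) ≤
      (4 - 2 * c) * (α ^ 2 * ‖g - gradient G x‖ ^ 2) +
        4 * (1 - c + c ^ 2) * (α * (G x - G y)) := by
  have hres := mul_le_mul_of_nonneg_left (sq_mul_norm_stepResidual_le hG hGlip hα hLα hstep)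
    (by linarith : 0 ≤ 1 - 2 * c)
  have hmove := mul_le_mul_of_nonneg_left (mul_norm_sub_sq_le hG hGlip hα.le hc₀ hLα hstep)
    (by linarith : 0 ≤ 2 * (1 + c))
  linarith

theorem sum_norm_sq_stepResidual_le {B : ℝ} (hG : Differentiable ℝ G)
    (hGlip : ∀ x y, ‖gradient G x - gradient G y‖ ≤ L * ‖x - y‖) (hGbound : ∀ x, |G x| ≤ B)
    (hα : 0 < α) (hc₀ : 0 ≤ c) (hc : c < 1 / 2) (hLα : L * α = c) {θ g : ℕ → E} {T : ℕ}
    (hstep : ∀ t < T, ‖θ (t + 1) - (θ t - α • g t)‖ ≤ ‖θ t - (θ t - α • g t)‖) :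
    ∑ t ∈ Finset.range T, ‖stepResidual G α (g t) (θ t) (θ (t + 1))‖ ^ 2 ≤
      (4 - 2 * c) / (1 - 2 * c) * ∑ t ∈ Finset.range T, ‖g t - gradient G (θ t)‖ ^ 2 +
        8 * (1 - c + c ^ 2) / (1 - 2 * c) * B / α := by
  have hsum : (1 - 2 * c) * (α ^ 2 * ∑ t ∈ Finset.range T,
        ‖stepResidual G α (g t) (θ t) (θ (t + 1))‖ ^ 2) ≤
      (4 - 2 * c) * (α ^ 2 * ∑ t ∈ Finset.range T, ‖g t - gradient G (θ t)‖ ^ 2) +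
        4 * (1 - c + c ^ 2) * (α * (G (θ 0) - G (θ T))) := by
    rw [← Finset.sum_range_sub' (fun t => G (θ t)) T]
    simp only [Finset.mul_sum, ← Finset.sum_add_distrib]
    exact Finset.sum_le_sum fun t ht =>
      stepResidual_descent hG hGlip hα hc₀ hc.le hLα (hstep t (Finset.mem_range.1 ht))
  have hdrop : G (θ 0) - G (θ T) ≤ 2 * B := by
    linarith [abs_le.1 (hGbound (θ 0)), abs_le.1 (hGbound (θ T))]
  have hc' : 0 < 1 - 2 * c := by linarith
  rw [← mul_le_mul_iff_right₀ (mul_pos hc' (pow_pos hα 2))]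
  calc _ = (1 - 2 * c) * (α ^ 2 * ∑ t ∈ Finset.range T,
        ‖stepResidual G α (g t) (θ t) (θ (t + 1))‖ ^ 2) := by ring
    _ ≤ _ := hsum
    _ ≤ (4 - 2 * c) * (α ^ 2 * ∑ t ∈ Finset.range T, ‖g t - gradient G (θ t)‖ ^ 2) +
        4 * (1 - c + c ^ 2) * (α * (2 * B)) := by
      gcongr
      nlinarith
    _ = _ := by field_simp; ring

end LipschitzGradient

theorem hard_thresholding_convergence_bound_general
    (d k : ℕ) (G : EuclideanSpace ℝ (Fin d) → ℝ) (L B : ℝ)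
    (hL : 0 < L)
    (hGdiff : Differentiable ℝ G)
    (hGlip : ∀ x y : EuclideanSpace ℝ (Fin d),
      ‖gradient G x - gradient G y‖ ≤ L * ‖x - y‖)
    (hGbound : ∀ x, |G x| ≤ B)
    (c α : ℝ) (hc0 : 0 < c) (hc1 : c < 1 / 2) (hα : α = c / L)
    (T : ℕ)
    (θ g : ℕ → EuclideanSpace ℝ (Fin d))
    (hθ0 : l0norm (θ 0) ≤ k)
    (hsparse : ∀ t < T, l0norm (θ (t + 1)) ≤ k)
    (hmin : ∀ t < T, ∀ u : EuclideanSpace ℝ (Fin d), l0norm u ≤ k →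
      ‖θ (t + 1) - (θ t - α • g t)‖ ≤ ‖u - (θ t - α • g t)‖)
    (c₁ c₂ : ℝ)
    (hc₁ : c₁ = (2 * c * (1 - 2 * c) + 2) / (c * (1 - 2 * c)))
    (hc₂ : c₂ = (12 - 8 * c) / (1 - 2 * c)) :
    (1 / T : ℝ) * ∑ t ∈ Finset.range T,
        ‖g t - gradient G (θ (t + 1)) + α⁻¹ • (θ (t + 1) - θ t)‖ ^ 2 ≤
      c₁ * ((1 / T : ℝ) * ∑ t ∈ Finset.range T, ‖g t - gradient G (θ t)‖ ^ 2) +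
        c₂ * B / (α * T) := by
  have hα₀ : 0 < α := by rw [hα]; positivity
  have hLα : L * α = c := by rw [hα]; field_simp
  have hB : 0 ≤ B := (abs_nonneg _).trans (hGbound 0)
  have hθ : ∀ t < T, l0norm (θ t) ≤ k
    | 0, _ => hθ0
    | t + 1, ht => hsparse t (by omega)
  have hbound := sum_norm_sq_stepResidual_le hGdiff hGlip hGbound hα₀ hc0.le hc1 hLα
    fun t ht => hmin t ht (θ t) (hθ t ht)
  have hc' : 0 < 1 - 2 * c := by linarith
  have hc₁' : (4 - 2 * c) / (1 - 2 * c) ≤ c₁ := by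
    rw [hc₁, div_le_div_iff₀ hc' (mul_pos hc0 hc'), ← sub_nonneg]
    nlinarith [mul_pos hc0 hc']
  have hc₂' : 8 * (1 - c + c ^ 2) / (1 - 2 * c) ≤ c₂ := by
    rw [hc₂, div_le_div_iff_of_pos_right hc']
    nlinarith
  calc _ ≤ (1 / T : ℝ) *
        (c₁ * ∑ t ∈ Finset.range T, ‖g t - gradient G (θ t)‖ ^ 2 + c₂ * B / α) := by
        gcongr
        refine hbound.trans ?_
        gcongr
    _ = _ := by ring

/-- Deterministic backbone of the main convergence theorem (Theorem 1): with step size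
`α = c/L`, `0 < c < 1/2`, the average squared stationarity witness along the
hard-thresholding iterates is bounded by
`c₁ (1/T) Σ ‖g_t − ∇G(θ_t)‖² + c₂ B/(αT)` with `c₁ = (2c(1−2c)+2)/(c(1−2c))` and
`c₂ = (12−8c)/(1−2c)`. -/
theorem hard_thresholding_convergence_bound
    (d k : ℕ) (hk : k ≤ d) (G : EuclideanSpace ℝ (Fin d) → ℝ) (L B : ℝ)
    (hL : 0 < L) (hB : 0 < B)
    (hGdiff : Differentiable ℝ G)
    (hGlip : ∀ x y : EuclideanSpace ℝ (Fin d),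
      ‖gradient G x - gradient G y‖ ≤ L * ‖x - y‖)
    (hGbound : ∀ x, |G x| ≤ B)
    (c α : ℝ) (hc0 : 0 < c) (hc1 : c < 1 / 2) (hα : α = c / L)
    (T : ℕ) (hT : 1 ≤ T)
    (θ g : ℕ → EuclideanSpace ℝ (Fin d))
    (hθ0 : l0norm (θ 0) ≤ k)
    (hsparse : ∀ t < T, l0norm (θ (t + 1)) ≤ k)
    (hmin : ∀ t < T, ∀ u : EuclideanSpace ℝ (Fin d), l0norm u ≤ k →
      ‖θ (t + 1) - (θ t - α • g t)‖ ≤ ‖u - (θ t - α • g t)‖)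
    (c₁ c₂ : ℝ)
    (hc₁ : c₁ = (2 * c * (1 - 2 * c) + 2) / (c * (1 - 2 * c)))
    (hc₂ : c₂ = (12 - 8 * c) / (1 - 2 * c)) :
    (1 / T : ℝ) * ∑ t ∈ Finset.range T,
        ‖g t - gradient G (θ (t + 1)) + α⁻¹ • (θ (t + 1) - θ t)‖ ^ 2 ≤
      c₁ * ((1 / T : ℝ) * ∑ t ∈ Finset.range T, ‖g t - gradient G (θ t)‖ ^ 2) +
        c₂ * B / (α * T) :=
  hard_thresholding_convergence_bound_general d k G L B hL hGdiff hGlip hGbound c α hc0 hc1 hα T θ g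
    hθ0 hsparse hmin c₁ c₂ hc₁ hc₂
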